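/- arXiv:quant-ph/0604013 — 3 statements merged into one kernel-verified Lean document; each statement's English description precedes it below -/
import Mathlib

section
/- For self-adjoint complex matrices A and B on a finite-dimensional Hilbert space and any positive semidefinite matrix P with P ≤ I (in the Loewner order), the inequality Tr[P(A − B)] ≤ Tr[{A ≥ B}(A − B)] holds. -/
open scoped Kronecker ComplexOrder
open Filter Matrix

/-- The spectral projection `{A ≥ 0}` onto the span of eigenvectors of `A` with
nonnegative eigenvalues, for a Hermitian matrix `A` (junk value `0` otherwise). -/
noncomputable def specProj {ι : Type*} [Fintype ι] [DecidableEq ι] (A : Matrix ι ι ℂ) :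
    Matrix ι ι ℂ :=
  if hA : A.IsHermitian then
    (Matrix.IsHermitian.eigenvectorUnitary hA : Matrix ι ι ℂ) *
      Matrix.diagonal (fun i => if 0 ≤ hA.eigenvalues i then (1 : ℂ) else 0) *
      star (Matrix.IsHermitian.eigenvectorUnitary hA : Matrix ι ι ℂ)
  else 0

/-- A density matrix: positive semidefinite with unit trace. -/
def IsState {ι : Type*} [Fintype ι] (ρ : Matrix ι ι ℂ) : Prop :=
  ρ.PosSemidef ∧ ρ.trace = 1

/-- `Tr[{ρ - c ω ≥ 0} (ρ - c ω)]` as a real number. -/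
noncomputable def projTrace {ι : Type*} [Fintype ι] [DecidableEq ι]
    (ρ ω : Matrix ι ι ℂ) (c : ℝ) : ℝ :=
  ((specProj (ρ - (c : ℂ) • ω) * (ρ - (c : ℂ) • ω)).trace).re

/-- The quantum spectral sup-divergence rate `D̄(ρ‖ω)`. -/
noncomputable def Dsup {ι : ℕ → Type} [∀ n, Fintype (ι n)] [∀ n, DecidableEq (ι n)]
    (ρ ω : ∀ n, Matrix (ι n) (ι n) ℂ) : ℝ :=
  sInf {γ : ℝ | Tendsto (fun n : ℕ => projTrace (ρ n) (ω n) (Real.exp (n * γ)))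
    atTop (nhds 0)}

/-- The quantum spectral inf-divergence rate `D̲(ρ‖ω)`. -/
noncomputable def Dinf {ι : ℕ → Type} [∀ n, Fintype (ι n)] [∀ n, DecidableEq (ι n)]
    (ρ ω : ∀ n, Matrix (ι n) (ι n) ℂ) : ℝ :=
  sSup {γ : ℝ | Tendsto (fun n : ℕ => projTrace (ρ n) (ω n) (Real.exp (n * γ)))
    atTop (nhds 1)}

/-- The sup-spectral entropy rate `S̄`. -/
noncomputable def Ssup {ι : ℕ → Type} [∀ n, Fintype (ι n)] [∀ n, DecidableEq (ι n)]
    (ρ : ∀ n, Matrix (ι n) (ι n) ℂ) : ℝ :=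
  - Dinf ρ (fun _ => 1)

/-- The inf-spectral entropy rate `S̲`. -/
noncomputable def Sinf {ι : ℕ → Type} [∀ n, Fintype (ι n)] [∀ n, DecidableEq (ι n)]
    (ρ : ∀ n, Matrix (ι n) (ι n) ℂ) : ℝ :=
  - Dsup ρ (fun _ => 1)

/-- Partial trace over the second tensor factor. -/
noncomputable def ptraceSnd {a b : Type*} [Fintype b]
    (M : Matrix (a × b) (a × b) ℂ) : Matrix a a ℂ :=
  Matrix.of fun i j => ∑ k : b, M (i, k) (j, k)

/-- Partial trace over the first tensor factor. -/
noncomputable def ptraceFst {a b : Type*} [Fintype a]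
    (M : Matrix (a × b) (a × b) ℂ) : Matrix b b ℂ :=
  Matrix.of fun i j => ∑ k : a, M (k, i) (k, j)

/-- Partial trace over the third tensor factor of a tripartite system. -/
noncomputable def ptraceThird {a b c : Type*} [Fintype c]
    (M : Matrix (a × b × c) (a × b × c) ℂ) : Matrix (a × b) (a × b) ℂ :=
  Matrix.of fun i j => ∑ k : c, M (i.1, i.2, k) (j.1, j.2, k)

/-- A completely positive trace preserving map, given by a Kraus representation. -/
def IsCPTP {ι κ : Type*} [Fintype ι] [Fintype κ] [DecidableEq ι]
    (T : Matrix ι ι ℂ →ₗ[ℂ] Matrix κ κ ℂ) : Prop :=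
  ∃ (r : ℕ) (K : Fin r → Matrix κ ι ℂ),
    (∀ X, T X = ∑ k, K k * X * (K k)ᴴ) ∧ (∑ k, (K k)ᴴ * K k = 1)


lemma diag_nonneg' {ι : Type*} [Fintype ι] [DecidableEq ι] {M : Matrix ι ι ℂ}
    (h : M.PosSemidef) (i : ι) : 0 ≤ M i i := by
  exact h.diag_nonneg

lemma trace_mul_diag' {ι : Type*} [Fintype ι] [DecidableEq ι] (M : Matrix ι ι ℂ) (d : ι → ℂ) :
    (M * Matrix.diagonal d).trace = ∑ i, M i i * d i := by
  simp [Matrix.trace, Matrix.diag, Matrix.mul_apply, Matrix.diagonal_apply, Finset.sum_ite_eq]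

/-- For self-adjoint matrices `A` and `B` and any positive semidefinite
`P` with `P ≤ I`, we have `Tr[P (A - B)] ≤ Tr[{A ≥ B} (A - B)]`. -/
theorem trace_proj_ineq {ι : Type*} [Fintype ι] [DecidableEq ι]
    (A B P : Matrix ι ι ℂ) (hA : A.IsHermitian) (hB : B.IsHermitian)
    (hP : P.PosSemidef) (hPI : ((1 : Matrix ι ι ℂ) - P).PosSemidef) :
    ((P * (A - B)).trace).re ≤ ((specProj (A - B) * (A - B)).trace).re := by
  have hC : (A - B).IsHermitian := hA.sub hB
  rw [specProj, dif_pos hC]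
  set V : Matrix ι ι ℂ := (hC.eigenvectorUnitary : Matrix ι ι ℂ) with hV
  have hVs : star V * V = 1 := Matrix.mem_unitaryGroup_iff'.mp hC.eigenvectorUnitary.2
  set d : ι → ℂ := fun i => (hC.eigenvalues i : ℂ) with hd
  have hspec : A - B = V * Matrix.diagonal d * star V := hC.spectral_theorem
  set ind : ι → ℂ := fun i => if 0 ≤ hC.eigenvalues i then (1 : ℂ) else 0 with hind
  set Q : Matrix ι ι ℂ := star V * P * V with hQdef
  have hQ : Q.PosSemidef := hP.conjTranspose_mul_mul_same V
  have h1Q : ((1 : Matrix ι ι ℂ) - Q).PosSemidef := by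
    have := hPI.conjTranspose_mul_mul_same V
    have e : Vᴴ * (1 - P) * V = 1 - Q := by
      show star V * (1 - P) * V = 1 - Q
      rw [Matrix.mul_sub, Matrix.mul_one, Matrix.sub_mul, hVs, hQdef]
    rwa [e] at this
  have htr1 : (P * (A - B)).trace = ∑ i, Q i i * d i := by
    rw [hspec, ← Matrix.mul_assoc, ← Matrix.mul_assoc, Matrix.trace_mul_comm,
      ← Matrix.mul_assoc, ← Matrix.mul_assoc, ← hQdef, trace_mul_diag']
  have htr2 : (V * Matrix.diagonal ind * star V * (A - B)).trace = ∑ i, ind i * d i := by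
    rw [hspec]
    simp only [Matrix.mul_assoc]
    rw [← Matrix.mul_assoc (star V) V, hVs, Matrix.one_mul, Matrix.trace_mul_comm]
    simp only [Matrix.mul_assoc]
    rw [hVs, Matrix.mul_one, Matrix.diagonal_mul_diagonal, Matrix.trace_diagonal]
  rw [htr1, htr2]
  simp only [Complex.re_sum]
  apply Finset.sum_le_sum
  intro i _
  have hq0 : 0 ≤ Q i i := diag_nonneg' hQ i
  have hq1 : Q i i ≤ 1 := by
    have := diag_nonneg' h1Q i
    have e : ((1 : Matrix ι ι ℂ) - Q) i i = 1 - Q i i := by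
      simp [Matrix.sub_apply, Matrix.one_apply]
    rw [e] at this; exact sub_nonneg.mp this
  rw [Complex.le_def] at hq0
  have him : (Q i i).im = 0 := hq0.2.symm
  have hre0 : 0 ≤ (Q i i).re := by simpa using hq0.1
  have hre1 : (Q i i).re ≤ 1 := by
    have := (Complex.le_def.mp hq1).1; simpa using this
  have hdre : (Q i i * d i).re = (Q i i).re * hC.eigenvalues i := by
    simp [hd, Complex.mul_re, him]
  have hire : (ind i * d i).re = (if 0 ≤ hC.eigenvalues i then (1:ℝ) else 0) * hC.eigenvalues i := by
    by_cases h : 0 ≤ hC.eigenvalues i <;> simp [hind, hd, h]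
  rw [hdre, hire]
  by_cases h : 0 ≤ hC.eigenvalues i
  · simp only [h, if_true, one_mul]; nlinarith
  · simp only [h, if_false, zero_mul]
    nlinarith [not_le.mp h]
end

section
/- For self-adjoint complex matrices A and B on a finite-dimensional Hilbert space and any CPTP map T, the inequality Tr[{T(A) ≥ T(B)} T(A − B)] ≤ Tr[{A ≥ B}(A − B)] holds. -/
open scoped Kronecker ComplexOrder
open Filter Matrix

section Aux

variable {ι : Type*} [Fintype ι] [DecidableEq ι]

lemma trace_mul_diagonal' (X : Matrix ι ι ℂ) (v : ι → ℂ) :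
    (X * Matrix.diagonal v).trace = ∑ i, X i i * v i := by
  simp [Matrix.trace, Matrix.diag, Matrix.mul_diagonal]

lemma posSemidef_diag_re_nonneg {M : Matrix ι ι ℂ} (hM : M.PosSemidef) (i : ι) :
    0 ≤ (M i i).re := by
  have h := (Matrix.posSemidef_iff_dotProduct_mulVec.mp hM).2 (Pi.single i 1)
  have hd : dotProduct (star (Pi.single i 1)) (M *ᵥ Pi.single i 1) = M i i := by
    simp [dotProduct, Matrix.mulVec, Pi.single_apply, mul_ite, ite_mul,
      mul_zero, zero_mul, mul_one, one_mul, Finset.sum_ite_eq, Finset.sum_ite_eq']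
  rw [hd, Complex.le_def] at h
  simpa using h.1

lemma specProj_posSemidef {A : Matrix ι ι ℂ} (hA : A.IsHermitian) :
    (specProj A).PosSemidef := by
  rw [specProj, dif_pos hA, Matrix.star_eq_conjTranspose]
  exact (Matrix.PosSemidef.diagonal (by intro i; dsimp; split <;> simp)).mul_mul_conjTranspose_same _

lemma one_sub_specProj_posSemidef {A : Matrix ι ι ℂ} (hA : A.IsHermitian) :
    (1 - specProj A).PosSemidef := by
  have hUU : (hA.eigenvectorUnitary : Matrix ι ι ℂ) * star (hA.eigenvectorUnitary : Matrix ι ι ℂ) = 1 :=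
    Matrix.mem_unitaryGroup_iff.mp hA.eigenvectorUnitary.2
  rw [specProj, dif_pos hA]
  have key : 1 - (hA.eigenvectorUnitary : Matrix ι ι ℂ) *
      Matrix.diagonal (fun i => if 0 ≤ hA.eigenvalues i then (1 : ℂ) else 0) *
      star (hA.eigenvectorUnitary : Matrix ι ι ℂ) =
      (hA.eigenvectorUnitary : Matrix ι ι ℂ) *
      Matrix.diagonal (fun i => if 0 ≤ hA.eigenvalues i then (0 : ℂ) else 1) *
      star (hA.eigenvectorUnitary : Matrix ι ι ℂ) := by
    have hdiag : Matrix.diagonal (fun i => if 0 ≤ hA.eigenvalues i then (0 : ℂ) else 1) =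
        1 - Matrix.diagonal (fun i => if 0 ≤ hA.eigenvalues i then (1 : ℂ) else 0) := by
      ext i j
      by_cases h : i = j
      · subst h
        simp only [Matrix.sub_apply, Matrix.diagonal_apply_eq, Matrix.one_apply_eq]
        split_ifs <;> simp
      · simp [Matrix.sub_apply, Matrix.diagonal_apply_ne _ h, Matrix.one_apply_ne h]
    rw [hdiag, Matrix.mul_sub, Matrix.sub_mul, mul_one, hUU]
  rw [key, Matrix.star_eq_conjTranspose]
  exact (Matrix.PosSemidef.diagonal (by intro i; dsimp; split <;> simp)).mul_mul_conjTranspose_same _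

/-- Key lemma: for Hermitian `C` and `0 ≤ Q ≤ 1`, `Tr[Q C] ≤ Tr[{C ≥ 0} C]`. -/
lemma trace_le_specProj_trace {C : Matrix ι ι ℂ} (hC : C.IsHermitian)
    {Q : Matrix ι ι ℂ} (hQ : Q.PosSemidef) (hQ1 : (1 - Q).PosSemidef) :
    ((Q * C).trace).re ≤ ((specProj C * C).trace).re := by
  set U : Matrix ι ι ℂ := (hC.eigenvectorUnitary : Matrix ι ι ℂ) with hUdef
  have hU : star U * U = 1 := Matrix.mem_unitaryGroup_iff'.mp hC.eigenvectorUnitary.2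
  set d : ι → ℂ := fun i => if 0 ≤ hC.eigenvalues i then (1 : ℂ) else 0 with hddef
  set v : ι → ℂ := RCLike.ofReal ∘ hC.eigenvalues with hvdef
  have hP : specProj C = U * Matrix.diagonal d * star U := by
    rw [specProj, dif_pos hC]
  have hCeq : C = U * Matrix.diagonal v * star U := hC.spectral_theorem
  set M : Matrix ι ι ℂ := star U * Q * U with hMdef
  -- RHS
  have h1 : specProj C * C = U * (Matrix.diagonal d * Matrix.diagonal v) * star U := by
    rw [hP]
    conv_lhs => rw [hCeq]
    simp only [mul_assoc]
    rw [← mul_assoc (star U) U, hU, one_mul]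
  have hRHS : (specProj C * C).trace = ∑ i, d i * v i := by
    rw [h1, Matrix.trace_mul_cycle, ← mul_assoc, hU, one_mul,
      Matrix.diagonal_mul_diagonal, Matrix.trace_diagonal]
  -- LHS
  have e1 : Q * C = Q * (U * Matrix.diagonal v) * star U := by
    rw [hCeq]; simp only [mul_assoc]
  have hLHS : (Q * C).trace = ∑ i, M i i * v i := by
    rw [e1, Matrix.trace_mul_cycle, ← mul_assoc, trace_mul_diagonal']
  have hMpos : M.PosSemidef := by
    simpa [hMdef, Matrix.star_eq_conjTranspose] using hQ.conjTranspose_mul_mul_same U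
  have hM1 : (1 - M).PosSemidef := by
    have h2 : star U * (1 - Q) * U = 1 - M := by
      rw [Matrix.mul_sub, Matrix.sub_mul, mul_one, hU, hMdef]
    rw [← h2, Matrix.star_eq_conjTranspose]
    exact hQ1.conjTranspose_mul_mul_same U
  rw [hLHS, hRHS, Complex.re_sum, Complex.re_sum]
  refine Finset.sum_le_sum fun i _ => ?_
  have h0 : 0 ≤ (M i i).re := posSemidef_diag_re_nonneg hMpos i
  have h1' : (M i i).re ≤ 1 := by
    have := posSemidef_diag_re_nonneg hM1 i
    simp only [Matrix.sub_apply, Matrix.one_apply_eq, Complex.sub_re, Complex.one_re] at this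
    linarith
  have hv : (M i i * v i).re = (M i i).re * hC.eigenvalues i := by
    simp [hvdef, Complex.mul_re]
  rw [hv, hddef]
  by_cases hpos : 0 ≤ hC.eigenvalues i
  · simp only [hpos, if_pos]
    have : (1 * v i).re = hC.eigenvalues i := by simp [hvdef]
    rw [this]
    nlinarith
  · simp only [hpos, if_neg, not_false_iff]
    have : ((0 : ℂ) * v i).re = 0 := by simp
    rw [this]
    push_neg at hpos
    nlinarith

end Aux

/-- For self-adjoint matrices `A`, `B` and any CPTP map `T`,
`Tr[{T(A) ≥ T(B)} T(A - B)] ≤ Tr[{A ≥ B} (A - B)]`. -/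
theorem trace_proj_cptp_ineq {ι κ : Type*} [Fintype ι] [Fintype κ]
    [DecidableEq ι] [DecidableEq κ]
    (T : Matrix ι ι ℂ →ₗ[ℂ] Matrix κ κ ℂ) (hT : IsCPTP T)
    (A B : Matrix ι ι ℂ) (hA : A.IsHermitian) (hB : B.IsHermitian) :
    ((specProj (T A - T B) * T (A - B)).trace).re ≤
      ((specProj (A - B) * (A - B)).trace).re := by

  obtain ⟨r, K, hK, hK1⟩ := hT
  have hC : (A - B).IsHermitian := hA.sub hB
  have hTC : T A - T B = T (A - B) := (map_sub T A B).symm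
  rw [hTC]
  have hD : (T (A - B)).IsHermitian := by
    rw [hK]
    simp only [Matrix.IsHermitian, Matrix.conjTranspose_sum, Matrix.conjTranspose_mul,
      Matrix.conjTranspose_conjTranspose, hC.eq, mul_assoc]
    exact Finset.sum_congr rfl fun k _ => (Matrix.mul_assoc _ _ _).symm
  set P : Matrix κ κ ℂ := specProj (T (A - B)) with hPdef
  set Q : Matrix ι ι ℂ := ∑ k, (K k)ᴴ * P * K k with hQdef
  have hPpsd : P.PosSemidef := specProj_posSemidef hD
  have hP1psd : (1 - P).PosSemidef := one_sub_specProj_posSemidef hD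
  have hQpsd : Q.PosSemidef := by
    rw [hQdef]
    refine Finset.sum_induction _ Matrix.PosSemidef (fun a b ha hb => ha.add hb)
      Matrix.PosSemidef.zero (fun k _ => hPpsd.conjTranspose_mul_mul_same (K k))
  have hQ1psd : (1 - Q).PosSemidef := by
    have h2 : (1 : Matrix ι ι ℂ) - Q = ∑ k, (K k)ᴴ * (1 - P) * K k := by
      rw [hQdef, ← hK1, ← Finset.sum_sub_distrib]
      congr 1; funext k
      simp [Matrix.mul_sub, Matrix.sub_mul]
    rw [h2]
    refine Finset.sum_induction _ Matrix.PosSemidef (fun a b ha hb => ha.add hb)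
      Matrix.PosSemidef.zero (fun k _ => hP1psd.conjTranspose_mul_mul_same (K k))
  have htr : (P * T (A - B)).trace = (Q * (A - B)).trace := by
    conv_lhs => rw [hK]
    rw [Matrix.mul_sum, Matrix.trace_sum, hQdef, Finset.sum_mul, Matrix.trace_sum]
    congr 1; funext k
    rw [← Matrix.mul_assoc P, Matrix.trace_mul_cycle P (K k * (A - B)) (K k)ᴴ]
    congr 1
    exact (Matrix.mul_assoc _ _ _).symm
  rw [htr]
  exact trace_le_specProj_trace hC hQpsd hQ1psd
end

section
/- For any sequence of states ρ = {ρ_n} and sequence of positive operators ω = {ω_n}, the spectral inf-divergence rate D̲(ρ‖ω) equals sup{α ∈ ℝ : lim_{n→∞} Tr[{ρ_n ≥ e^{nα} ω_n} ρ_n] = 1}. -/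
open scoped Kronecker ComplexOrder
open Filter Matrix

section Aux

variable {κ : Type*} [Fintype κ] [DecidableEq κ]

private lemma diag_re_nonneg {M : Matrix κ κ ℂ} (hM : M.PosSemidef) (i : κ) :
    0 ≤ (M i i).re := by
  have := hM.re_dotProduct_nonneg (Pi.single i 1)
  simpa [dotProduct, Pi.single_apply] using this

private lemma trace_mul_re_eq {X : Matrix κ κ ℂ} (hX : X.IsHermitian) (Q : Matrix κ κ ℂ) :
    ((Q * X).trace).re = ∑ i, ((star (hX.eigenvectorUnitary : Matrix κ κ ℂ) * Q *
      (hX.eigenvectorUnitary : Matrix κ κ ℂ)) i i).re * hX.eigenvalues i := by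
  set U : Matrix κ κ ℂ := (hX.eigenvectorUnitary : Matrix κ κ ℂ) with hU
  set d : κ → ℂ := RCLike.ofReal ∘ hX.eigenvalues with hd
  have h1 : (Q * X).trace = ((star U * Q * U) * Matrix.diagonal d).trace := by
    conv_lhs => rw [hX.spectral_theorem, Unitary.conjStarAlgAut_apply]
    rw [show Q * (U * Matrix.diagonal d * star U)
        = (Q * (U * Matrix.diagonal d)) * star U by simp [mul_assoc], Matrix.trace_mul_comm]
    simp [mul_assoc]
  rw [h1]
  simp [Matrix.trace, Matrix.diag, Matrix.mul_diagonal, Complex.re_sum, Complex.mul_re, hd,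
    Function.comp]

private lemma specProj_of {X : Matrix κ κ ℂ} (hX : X.IsHermitian) :
    specProj X = (hX.eigenvectorUnitary : Matrix κ κ ℂ) *
      Matrix.diagonal (fun i => if 0 ≤ hX.eigenvalues i then (1 : ℂ) else 0) *
      star (hX.eigenvectorUnitary : Matrix κ κ ℂ) := dif_pos hX

private lemma unitary_mul_star {X : Matrix κ κ ℂ} (hX : X.IsHermitian) :
    (hX.eigenvectorUnitary : Matrix κ κ ℂ) * star (hX.eigenvectorUnitary : Matrix κ κ ℂ) = 1 :=
  Matrix.mem_unitaryGroup_iff.mp (hX.eigenvectorUnitary).2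

private lemma star_mul_unitary {X : Matrix κ κ ℂ} (hX : X.IsHermitian) :
    star (hX.eigenvectorUnitary : Matrix κ κ ℂ) * (hX.eigenvectorUnitary : Matrix κ κ ℂ) = 1 :=
  Matrix.mem_unitaryGroup_iff'.mp (hX.eigenvectorUnitary).2

private lemma specProj_posSemidef_s3 {X : Matrix κ κ ℂ} (hX : X.IsHermitian) :
    (specProj X).PosSemidef := by
  rw [specProj_of hX]
  have hd : Matrix.PosSemidef
      (Matrix.diagonal (fun i => if 0 ≤ hX.eigenvalues i then (1 : ℂ) else 0)) := by
    refine Matrix.PosSemidef.diagonal fun i => ?_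
    dsimp only; split_ifs <;> simp
  simpa [Matrix.star_eq_conjTranspose] using
    hd.mul_mul_conjTranspose_same (hX.eigenvectorUnitary : Matrix κ κ ℂ)

private lemma one_sub_specProj_posSemidef_s3 {X : Matrix κ κ ℂ} (hX : X.IsHermitian) :
    ((1 : Matrix κ κ ℂ) - specProj X).PosSemidef := by
  have h : (1 : Matrix κ κ ℂ) - specProj X = (hX.eigenvectorUnitary : Matrix κ κ ℂ) *
      Matrix.diagonal (fun i => 1 - if 0 ≤ hX.eigenvalues i then (1 : ℂ) else 0) *
      star (hX.eigenvectorUnitary : Matrix κ κ ℂ) := by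
    rw [specProj_of hX]
    have : Matrix.diagonal (fun i => 1 - if 0 ≤ hX.eigenvalues i then (1 : ℂ) else 0)
        = 1 - Matrix.diagonal (fun i => if 0 ≤ hX.eigenvalues i then (1 : ℂ) else 0) := by
      rw [← Matrix.diagonal_one, ← Matrix.diagonal_sub]
    rw [this, Matrix.mul_sub, Matrix.sub_mul, Matrix.mul_one, unitary_mul_star hX]
  rw [h]
  have hd : Matrix.PosSemidef
      (Matrix.diagonal (fun i => 1 - if 0 ≤ hX.eigenvalues i then (1 : ℂ) else 0)) := by
    refine Matrix.PosSemidef.diagonal fun i => ?_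
    dsimp only; split_ifs <;> simp
  simpa [Matrix.star_eq_conjTranspose] using
    hd.mul_mul_conjTranspose_same (hX.eigenvectorUnitary : Matrix κ κ ℂ)

private lemma trace_specProj_mul_re {X : Matrix κ κ ℂ} (hX : X.IsHermitian) :
    ((specProj X * X).trace).re = ∑ i, if 0 ≤ hX.eigenvalues i then hX.eigenvalues i else 0 := by
  rw [trace_mul_re_eq hX]
  have hC : star (hX.eigenvectorUnitary : Matrix κ κ ℂ) * specProj X *
      (hX.eigenvectorUnitary : Matrix κ κ ℂ)
      = Matrix.diagonal (fun i => if 0 ≤ hX.eigenvalues i then (1 : ℂ) else 0) := by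
    rw [specProj_of hX]
    simp only [← mul_assoc]
    rw [star_mul_unitary hX, one_mul, mul_assoc, star_mul_unitary hX, mul_one]
  rw [hC]
  refine Finset.sum_congr rfl fun i _ => ?_
  rw [Matrix.diagonal_apply_eq]
  split_ifs <;> simp

private lemma trace_specProj_mul_re_nonneg {X : Matrix κ κ ℂ} (hX : X.IsHermitian) :
    0 ≤ ((specProj X * X).trace).re := by
  rw [trace_specProj_mul_re hX]
  refine Finset.sum_nonneg fun i _ => ?_
  split_ifs with h
  · exact h
  · exact le_refl 0

private lemma trace_mul_re_le_trace_specProj {Q X : Matrix κ κ ℂ} (hQ : Q.PosSemidef)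
    (hQ1 : ((1 : Matrix κ κ ℂ) - Q).PosSemidef) (hX : X.IsHermitian) :
    ((Q * X).trace).re ≤ ((specProj X * X).trace).re := by
  rw [trace_mul_re_eq hX Q, trace_specProj_mul_re hX]
  refine Finset.sum_le_sum fun i _ => ?_
  set U : Matrix κ κ ℂ := (hX.eigenvectorUnitary : Matrix κ κ ℂ) with hU
  have hC : (star U * Q * U).PosSemidef := by
    simpa [Matrix.star_eq_conjTranspose] using hQ.conjTranspose_mul_mul_same U
  have hC1 : ((1 : Matrix κ κ ℂ) - star U * Q * U).PosSemidef := by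
    have h2 : Uᴴ * ((1 : Matrix κ κ ℂ) - Q) * U = 1 - star U * Q * U := by
      rw [Matrix.star_eq_conjTranspose] at *
      rw [Matrix.mul_sub, Matrix.sub_mul, Matrix.mul_one]
      rw [show Uᴴ * U = 1 from star_mul_unitary hX]
    simpa [h2] using hQ1.conjTranspose_mul_mul_same U
  have h0 : 0 ≤ ((star U * Q * U) i i).re := diag_re_nonneg hC i
  have h1 : ((star U * Q * U) i i).re ≤ 1 := by
    have := diag_re_nonneg hC1 i
    simp [Matrix.sub_apply, Matrix.one_apply, Complex.sub_re] at this
    linarith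
  split_ifs with h
  · calc ((star U * Q * U) i i).re * hX.eigenvalues i
        ≤ 1 * hX.eigenvalues i := mul_le_mul_of_nonneg_right h1 h
      _ = hX.eigenvalues i := one_mul _
  · push_neg at h
    exact mul_nonpos_of_nonneg_of_nonpos h0 h.le

private lemma trace_mul_re_nonneg {Q X : Matrix κ κ ℂ} (hQ : Q.PosSemidef)
    (hX : X.PosSemidef) : 0 ≤ ((Q * X).trace).re := by
  rw [trace_mul_re_eq hX.1 Q]
  refine Finset.sum_nonneg fun i _ => ?_
  have hC : (star (hX.1.eigenvectorUnitary : Matrix κ κ ℂ) * Q *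
      (hX.1.eigenvectorUnitary : Matrix κ κ ℂ)).PosSemidef := by
    simpa [Matrix.star_eq_conjTranspose] using
      hQ.conjTranspose_mul_mul_same (hX.1.eigenvectorUnitary : Matrix κ κ ℂ)
  exact mul_nonneg (diag_re_nonneg hC i) (hX.eigenvalues_nonneg i)

private lemma trace_mul_re_le_one {Q σ : Matrix κ κ ℂ} (hQ1 : ((1 : Matrix κ κ ℂ) - Q).PosSemidef)
    (hσ : IsState σ) : ((Q * σ).trace).re ≤ 1 := by
  have h := trace_mul_re_nonneg hQ1 hσ.1
  rw [Matrix.sub_mul, Matrix.one_mul, Matrix.trace_sub, Complex.sub_re] at h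
  have hσt : (σ.trace).re = 1 := by rw [hσ.2]; simp
  linarith

private lemma herm_sub {ρ ω : Matrix κ κ ℂ} (hρ : ρ.IsHermitian) (hω : ω.IsHermitian) (c : ℝ) :
    (ρ - (c : ℂ) • ω).IsHermitian := by
  refine hρ.sub ?_
  unfold Matrix.IsHermitian
  rw [Matrix.conjTranspose_smul, hω.eq]
  simp [Complex.star_def, Complex.conj_ofReal]

private lemma trace_mul_sub_smul_re (P σ ω : Matrix κ κ ℂ) (c : ℝ) :
    ((P * (σ - (c : ℂ) • ω)).trace).re = ((P * σ).trace).re - c * ((P * ω).trace).re := by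
  rw [Matrix.mul_sub, Matrix.trace_sub, Matrix.mul_smul, Matrix.trace_smul]
  simp [Complex.sub_re, smul_eq_mul, Complex.mul_re]

private lemma sSup_eq_sSup_of_subset {A B : Set ℝ} (hAB : A ⊆ B)
    (h : ∀ α ∈ B, ∀ γ < α, γ ∈ A) : sSup A = sSup B := by
  rcases B.eq_empty_or_nonempty with hB | hB
  · have hA : A = ∅ := Set.subset_empty_iff.mp (hB ▸ hAB)
    rw [hA, hB]
  by_cases hbdd : BddAbove B
  · obtain ⟨α, hα⟩ := hB
    have hAne : A.Nonempty := ⟨α - 1, h α hα _ (by linarith)⟩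
    refine le_antisymm (csSup_le_csSup hbdd hAne hAB) (csSup_le ⟨α, hα⟩ fun b hb => ?_)
    by_contra hlt
    push_neg at hlt
    obtain ⟨γ, h1, h2⟩ := exists_between hlt
    exact absurd (le_csSup (hbdd.mono hAB) (h b hb γ h2)) (not_le.mpr h1)
  · have hAbdd : ¬ BddAbove A := by
      rintro ⟨x, hx⟩
      apply hbdd
      refine ⟨x, fun b hb => ?_⟩
      by_contra hxb
      push_neg at hxb
      obtain ⟨γ, h1, h2⟩ := exists_between hxb
      exact absurd (hx (h b hb γ h2)) (not_le.mpr h1)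
    rw [Real.sSup_of_not_bddAbove hAbdd, Real.sSup_of_not_bddAbove hbdd]

end Aux

/-- The spectral inf-divergence rate `D̲(ρ‖ω)` equals
`sup {α : lim_n Tr[{ρ_n ≥ e^{nα} ω_n} ρ_n] = 1}`. -/
theorem Dinf_eq_classic {ι : ℕ → Type} [∀ n, Fintype (ι n)] [∀ n, DecidableEq (ι n)]
    (ρ ω : ∀ n, Matrix (ι n) (ι n) ℂ)
    (hρ : ∀ n, IsState (ρ n)) (hω : ∀ n, (ω n).PosSemidef) :
    Dinf ρ ω = sSup {α : ℝ | Filter.Tendsto (fun n : ℕ =>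
      ((specProj (ρ n - (Real.exp (n * α) : ℂ) • ω n) * ρ n).trace).re)
      Filter.atTop (nhds 1)} := by
  have hH : ∀ (n : ℕ) (c : ℝ), (ρ n - (c : ℂ) • ω n).IsHermitian :=
    fun n c => herm_sub (hρ n).1.1 (hω n).1 c
  have key : ∀ (n : ℕ) (c : ℝ), projTrace (ρ n) (ω n) c
      = ((specProj (ρ n - (c : ℂ) • ω n) * ρ n).trace).re
        - c * ((specProj (ρ n - (c : ℂ) • ω n) * ω n).trace).re := by
    intro n c
    rw [projTrace, trace_mul_sub_smul_re]
  have hPω : ∀ (n : ℕ) (c : ℝ), 0 ≤ ((specProj (ρ n - (c : ℂ) • ω n) * ω n).trace).re :=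
    fun n c => trace_mul_re_nonneg (specProj_posSemidef_s3 (hH n c)) (hω n)
  have hPρ_le : ∀ (n : ℕ) (c : ℝ), ((specProj (ρ n - (c : ℂ) • ω n) * ρ n).trace).re ≤ 1 :=
    fun n c => trace_mul_re_le_one (one_sub_specProj_posSemidef_s3 (hH n c)) (hρ n)
  have hle : ∀ (n : ℕ) (c : ℝ), 0 < c →
      projTrace (ρ n) (ω n) c ≤ ((specProj (ρ n - (c : ℂ) • ω n) * ρ n).trace).re := by
    intro n c hc
    rw [key n c]
    nlinarith [hPω n c]
  have hle1 : ∀ (n : ℕ) (c : ℝ), 0 < c → projTrace (ρ n) (ω n) c ≤ 1 :=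
    fun n c hc => (hle n c hc).trans (hPρ_le n c)
  unfold Dinf
  apply sSup_eq_sSup_of_subset
  · -- A ⊆ B
    intro γ hγ
    simp only [Set.mem_setOf_eq] at hγ ⊢
    exact tendsto_of_tendsto_of_tendsto_of_le_of_le hγ tendsto_const_nhds
      (fun n => hle n _ (Real.exp_pos _)) (fun n => hPρ_le n _)
  · -- downward closure of B is in A
    intro α hα γ hγα
    simp only [Set.mem_setOf_eq] at hα ⊢
    have lower : ∀ n : ℕ,
        ((specProj (ρ n - (Real.exp ((n : ℝ) * α) : ℂ) • ω n) * ρ n).trace).re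
          - Real.exp ((n : ℝ) * γ - (n : ℝ) * α)
        ≤ projTrace (ρ n) (ω n) (Real.exp ((n : ℝ) * γ)) := by
      intro n
      set c : ℝ := Real.exp ((n : ℝ) * γ) with hc
      set a : ℝ := Real.exp ((n : ℝ) * α) with ha
      have hcpos : 0 < c := Real.exp_pos _
      have hapos : 0 < a := Real.exp_pos _
      have h1 : ((specProj (ρ n - (a : ℂ) • ω n) * (ρ n - (c : ℂ) • ω n)).trace).re
          ≤ projTrace (ρ n) (ω n) c := by
        rw [projTrace]
        exact trace_mul_re_le_trace_specProj (specProj_posSemidef_s3 (hH n a))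
          (one_sub_specProj_posSemidef_s3 (hH n a)) (hH n c)
      rw [trace_mul_sub_smul_re] at h1
      have h2 : 0 ≤ ((specProj (ρ n - (a : ℂ) • ω n) * ρ n).trace).re
          - a * ((specProj (ρ n - (a : ℂ) • ω n) * ω n).trace).re := by
        have := trace_specProj_mul_re_nonneg (hH n a)
        rwa [trace_mul_sub_smul_re] at this
      have h3 : ((specProj (ρ n - (a : ℂ) • ω n) * ω n).trace).re ≤ 1 / a := by
        rw [le_div_iff₀ hapos]
        nlinarith [hPρ_le n a]
      have h4 : c * ((specProj (ρ n - (a : ℂ) • ω n) * ω n).trace).re ≤ c / a := by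
        have := mul_le_mul_of_nonneg_left h3 hcpos.le
        rwa [mul_one_div] at this
      have h5 : Real.exp ((n : ℝ) * γ - (n : ℝ) * α) = c / a := by
        rw [Real.exp_sub]
      rw [h5]
      linarith
    have upper : ∀ n : ℕ, projTrace (ρ n) (ω n) (Real.exp ((n : ℝ) * γ)) ≤ 1 :=
      fun n => hle1 n _ (Real.exp_pos _)
    have hexp0 : Filter.Tendsto (fun n : ℕ => Real.exp ((n : ℝ) * γ - (n : ℝ) * α))
        Filter.atTop (nhds 0) := by
      have h7 : Filter.Tendsto (fun n : ℕ => (n : ℝ) * (γ - α)) Filter.atTop Filter.atBot :=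
        Filter.Tendsto.atTop_mul_const_of_neg (by linarith) tendsto_natCast_atTop_atTop
      exact Real.tendsto_exp_atBot.comp (Filter.Tendsto.congr (fun n => by ring) h7)
    have hlow : Filter.Tendsto (fun n : ℕ =>
        ((specProj (ρ n - (Real.exp ((n : ℝ) * α) : ℂ) • ω n) * ρ n).trace).re
          - Real.exp ((n : ℝ) * γ - (n : ℝ) * α)) Filter.atTop (nhds 1) := by
      have := hα.sub hexp0
      simpa using this
    exact tendsto_of_tendsto_of_tendsto_of_le_of_le hlow tendsto_const_nhds lower upper
end
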